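/- arXiv:1605.01928 — 5 statements merged into one kernel-verified Lean document; each statement's English description precedes it below -/
import Mathlib

section
/- The sequence (ω_n)_{n∈ℕ} is positive and strictly increasing, and the sequence (τ_n)_{n∈ℕ} defined by τ_n := ω_{n+1} − ω_n is positive and non-increasing. -/
open Real

/-- The sequence `ω_n`. -/
noncomputable def omega (n : ℕ) : ℝ :=
  if Odd n then
    ((2 * (n : ℝ) + 3) / ((n : ℝ) + 1)) * Real.Gamma ((n : ℝ) / 2 + 1) /
      Real.Gamma (((n : ℝ) + 1) / 2)
  else
    ((n : ℝ) + 1) * Real.Gamma (((n : ℝ) + 1) / 2) / Real.Gamma ((n : ℝ) / 2 + 1)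

noncomputable def cseq (n : ℕ) : ℝ :=
  Real.Gamma (((n : ℝ) + 1) / 2) / Real.Gamma (((n : ℝ) + 2) / 2)

lemma cseq_pos (n : ℕ) : 0 < cseq n := by
  apply div_pos <;> apply Real.Gamma_pos_of_pos <;> positivity

lemma gamma_rec (n : ℕ) :
    Real.Gamma (((n : ℝ) + 3) / 2) = (((n : ℝ) + 1) / 2) * Real.Gamma (((n : ℝ) + 1) / 2) := by
  have h : ((n : ℝ) + 3) / 2 = ((n : ℝ) + 1) / 2 + 1 := by ring
  rw [h, Real.Gamma_add_one (by positivity)]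

lemma cseq_rec (n : ℕ) : cseq (n + 2) = cseq n * (((n : ℝ) + 1) / ((n : ℝ) + 2)) := by
  have hg1 : Real.Gamma (((n : ℝ) + 1) / 2) ≠ 0 := ne_of_gt (Real.Gamma_pos_of_pos (by positivity))
  have hg2 : Real.Gamma (((n : ℝ) + 2) / 2) ≠ 0 := ne_of_gt (Real.Gamma_pos_of_pos (by positivity))
  have hn2 : (n : ℝ) + 2 ≠ 0 := by positivity
  unfold cseq
  push_cast
  have e1 : ((n : ℝ) + 2 + 1) / 2 = ((n : ℝ) + 3) / 2 := by ring
  have e2 : ((n : ℝ) + 2 + 2) / 2 = ((n : ℝ) + 2) / 2 + 1 := by ring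
  rw [e1, e2, gamma_rec, Real.Gamma_add_one (by positivity)]
  field_simp

lemma omega_even {n : ℕ} (h : Even n) : omega n = ((n : ℝ) + 1) * cseq n := by
  rw [omega, if_neg (Nat.not_odd_iff_even.mpr h)]
  unfold cseq
  have e : (n : ℝ) / 2 + 1 = ((n : ℝ) + 2) / 2 := by ring
  rw [e]
  ring

lemma omega_odd {n : ℕ} (h : Odd n) : omega n = ((n : ℝ) + 3 / 2) * cseq (n + 1) := by
  rw [omega, if_pos h]
  unfold cseq
  push_cast
  have e1 : (n : ℝ) / 2 + 1 = ((n : ℝ) + 2) / 2 := by ring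
  have e2 : ((n : ℝ) + 1 + 1) / 2 = ((n : ℝ) + 2) / 2 := by ring
  have e3 : ((n : ℝ) + 1 + 2) / 2 = ((n : ℝ) + 3) / 2 := by ring
  rw [e1, e2, e3, gamma_rec]
  have hg1 : Real.Gamma (((n : ℝ) + 1) / 2) ≠ 0 := ne_of_gt (Real.Gamma_pos_of_pos (by positivity))
  have hn1 : (n : ℝ) + 1 ≠ 0 := by positivity
  field_simp

lemma tau_even {n : ℕ} (h : Even n) :
    omega (n + 1) - omega n = (((n : ℝ) + 1) / (2 * ((n : ℝ) + 2))) * cseq n := by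
  rw [omega_odd (Even.add_one h), omega_even h]
  push_cast
  rw [cseq_rec]
  have hn2 : (n : ℝ) + 2 ≠ 0 := by positivity
  field_simp
  ring

lemma tau_odd {n : ℕ} (h : Odd n) :
    omega (n + 1) - omega n = (1 / 2) * cseq (n + 1) := by
  rw [omega_even (Odd.add_one h), omega_odd h]
  push_cast
  ring

lemma tau_pos (n : ℕ) : 0 < omega (n + 1) - omega n := by
  rcases Nat.even_or_odd n with h | h
  · rw [tau_even h]
    have := cseq_pos n
    positivity
  · rw [tau_odd h]
    have := cseq_pos (n + 1)
    positivity

theorem omega_monotonicity :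
    (∀ n : ℕ, 0 < omega n) ∧ StrictMono omega ∧
    (∀ n : ℕ, 0 < omega (n + 1) - omega n) ∧
    (∀ n : ℕ, omega (n + 2) - omega (n + 1) ≤ omega (n + 1) - omega n) := by
  refine ⟨?_, ?_, tau_pos, ?_⟩
  · intro n
    rcases Nat.even_or_odd n with h | h
    · rw [omega_even h]
      have := cseq_pos n
      positivity
    · rw [omega_odd h]
      have := cseq_pos (n + 1)
      positivity
  · exact strictMono_nat_of_lt_succ fun n => by linarith [tau_pos n]
  · intro n
    rcases Nat.even_or_odd n with h | h
    · -- τ_{n+1} = τ_n exactly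
      have h1 : Odd (n + 1) := Even.add_one h
      rw [show n + 2 = (n + 1) + 1 from rfl, tau_odd h1, tau_even h, cseq_rec]
      have hn2 : (n : ℝ) + 2 ≠ 0 := by positivity
      apply le_of_eq
      field_simp
    · have h1 : Even (n + 1) := Odd.add_one h
      rw [show n + 2 = (n + 1) + 1 from rfl, tau_even h1, tau_odd h]
      push_cast
      have hc := (cseq_pos (n + 1)).le
      apply mul_le_mul_of_nonneg_right _ hc
      rw [div_le_div_iff₀ (by positivity) (by norm_num)]
      nlinarith [Nat.cast_nonneg (α := ℝ) n]
end

section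
/- Let (a_k)_{k∈ℕ} and (b_k)_{k∈ℕ} be sequences of positive real numbers with (b_k) non-decreasing, and let (c_k)_{k∈ℕ} be a real sequence such that ∑_{k=0}^{m} a_k ≤ ∑_{k=0}^{m} c_k for all m ∈ ℕ. Then for every s > 0 and every n ∈ ℕ, ∑_{k=0}^{n} a_k^{−s} ≥ ∑_{k=0}^{n} [ (s+1) b_k^{−s} − s b_k^{−s−1} c_k ]. Moreover, if in addition (c_k) is positive and non-decreasing, then for each fixed n and s the right-hand side, viewed as a function of (b_0,…,b_n) ∈ (0,∞)^{n+1}, is maximized exactly when b_k = c_k for all 0 ≤ k ≤ n, in which case the inequality reads ∑_{k=0}^{n} a_k^{−s} ≥ ∑_{k=0}^{n} c_k^{−s}. -/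
open Real Finset

private lemma tangent_core (s : ℝ) (hs : 0 < s) {x t : ℝ} (hx : 0 < x) (ht : 0 < t) :
    (s + 1) * x * t ^ s - s * (t ^ s * t) ≤ x ^ s * x := by
  have hz : -1 ≤ x / t - 1 := by
    have : 0 < x / t := div_pos hx ht
    linarith
  have hb := one_add_mul_self_le_rpow_one_add hz (p := s + 1) (by linarith)
  have h1 : 1 + (x / t - 1) = x / t := by ring
  rw [h1] at hb
  have h2 : (x / t) ^ (s + 1) = (x ^ s * x) / (t ^ s * t) := by
    rw [Real.div_rpow hx.le ht.le, Real.rpow_add hx, Real.rpow_add ht,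
      Real.rpow_one, Real.rpow_one]
  rw [h2] at hb
  have hts : 0 < t ^ s := Real.rpow_pos_of_pos ht s
  have htt : 0 < t ^ s * t := mul_pos hts ht
  rw [le_div_iff₀ htt] at hb
  have hexp : (1 + (s + 1) * (x / t - 1)) * (t ^ s * t)
      = t ^ s * t + (s + 1) * (x * t ^ s - t ^ s * t) := by
    field_simp
  rw [hexp] at hb
  linarith

private lemma tangent_core_strict (s : ℝ) (hs : 0 < s) {x t : ℝ} (hx : 0 < x) (ht : 0 < t)
    (hne : x ≠ t) :
    (s + 1) * x * t ^ s - s * (t ^ s * t) < x ^ s * x := by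
  have hz : -1 ≤ x / t - 1 := by
    have : 0 < x / t := div_pos hx ht
    linarith
  have hz' : x / t - 1 ≠ 0 := by
    intro h
    apply hne
    field_simp at h
    linarith
  have hb := one_add_mul_self_lt_rpow_one_add hz hz' (p := s + 1) (by linarith)
  have h1 : 1 + (x / t - 1) = x / t := by ring
  rw [h1] at hb
  have h2 : (x / t) ^ (s + 1) = (x ^ s * x) / (t ^ s * t) := by
    rw [Real.div_rpow hx.le ht.le, Real.rpow_add hx, Real.rpow_add ht,
      Real.rpow_one, Real.rpow_one]
  rw [h2] at hb
  have hts : 0 < t ^ s := Real.rpow_pos_of_pos ht s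
  have htt : 0 < t ^ s * t := mul_pos hts ht
  rw [lt_div_iff₀ htt] at hb
  have hexp : (1 + (s + 1) * (x / t - 1)) * (t ^ s * t)
      = t ^ s * t + (s + 1) * (x * t ^ s - t ^ s * t) := by
    field_simp
  rw [hexp] at hb
  linarith

private lemma tangent_le (s : ℝ) (hs : 0 < s) {x t : ℝ} (hx : 0 < x) (ht : 0 < t) :
    (s + 1) * x ^ (-s) - s * x ^ (-s - 1) * t ≤ t ^ (-s) := by
  have hxs : 0 < x ^ s := Real.rpow_pos_of_pos hx s
  have hts : 0 < t ^ s := Real.rpow_pos_of_pos ht s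
  have e1 : x ^ (-s) = (x ^ s)⁻¹ := by rw [Real.rpow_neg hx.le]
  have e2 : x ^ (-s - 1) = (x ^ s * x)⁻¹ := by
    rw [show -s - 1 = -(s + 1) by ring, Real.rpow_neg hx.le, Real.rpow_add hx, Real.rpow_one]
  have e3 : t ^ (-s) = (t ^ s)⁻¹ := by rw [Real.rpow_neg ht.le]
  rw [e1, e2, e3, ← sub_nonneg]
  have key := tangent_core s hs hx ht
  have hE : (t ^ s)⁻¹ - ((s + 1) * (x ^ s)⁻¹ - s * (x ^ s * x)⁻¹ * t)
      = (x ^ s * x - ((s + 1) * x * t ^ s - s * (t ^ s * t))) / (x ^ s * x * t ^ s) := by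
    field_simp
  rw [hE]
  apply div_nonneg (by linarith) (by positivity)

private lemma tangent_lt (s : ℝ) (hs : 0 < s) {x t : ℝ} (hx : 0 < x) (ht : 0 < t) (hne : x ≠ t) :
    (s + 1) * x ^ (-s) - s * x ^ (-s - 1) * t < t ^ (-s) := by
  have hxs : 0 < x ^ s := Real.rpow_pos_of_pos hx s
  have hts : 0 < t ^ s := Real.rpow_pos_of_pos ht s
  have e1 : x ^ (-s) = (x ^ s)⁻¹ := by rw [Real.rpow_neg hx.le]
  have e2 : x ^ (-s - 1) = (x ^ s * x)⁻¹ := by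
    rw [show -s - 1 = -(s + 1) by ring, Real.rpow_neg hx.le, Real.rpow_add hx, Real.rpow_one]
  have e3 : t ^ (-s) = (t ^ s)⁻¹ := by rw [Real.rpow_neg ht.le]
  rw [e1, e2, e3, ← sub_pos]
  have key := tangent_core_strict s hs hx ht hne
  have hE : (t ^ s)⁻¹ - ((s + 1) * (x ^ s)⁻¹ - s * (x ^ s * x)⁻¹ * t)
      = (x ^ s * x - ((s + 1) * x * t ^ s - s * (t ^ s * t))) / (x ^ s * x * t ^ s) := by
    field_simp
  rw [hE]
  apply div_pos (by linarith) (by positivity)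

private lemma tangent_eq_self (s : ℝ) {t : ℝ} (ht : 0 < t) :
    (s + 1) * t ^ (-s) - s * t ^ (-s - 1) * t = t ^ (-s) := by
  have h : t ^ (-s - 1) = t ^ (-s) / t := by
    rw [Real.rpow_sub ht, Real.rpow_one]
  rw [h]
  field_simp
  ring

private lemma abel_nonpos (w d : ℕ → ℝ) (hw : ∀ k, 0 ≤ w k) (hmono : ∀ k, w (k + 1) ≤ w k)
    (hd : ∀ m : ℕ, ∑ k ∈ Finset.range (m + 1), d k ≤ 0) (n : ℕ) :
    ∑ k ∈ Finset.range (n + 1), w k * d k ≤ 0 := by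
  have key : ∀ n : ℕ, ∑ k ∈ Finset.range (n + 1), w k * d k
      ≤ w n * ∑ k ∈ Finset.range (n + 1), d k := by
    intro n
    induction n with
    | zero => simp
    | succ m ih =>
      rw [Finset.sum_range_succ, Finset.sum_range_succ d]
      have h1 := hd m
      have h2 := hmono m
      calc ∑ k ∈ Finset.range (m + 1), w k * d k + w (m + 1) * d (m + 1)
          ≤ w m * ∑ k ∈ Finset.range (m + 1), d k + w (m + 1) * d (m + 1) := by linarith
        _ ≤ w (m + 1) * (∑ k ∈ Finset.range (m + 1), d k + d (m + 1)) := by nlinarith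
  calc ∑ k ∈ Finset.range (n + 1), w k * d k ≤ w n * ∑ k ∈ Finset.range (n + 1), d k := key n
    _ ≤ 0 := mul_nonpos_of_nonneg_of_nonpos (hw n) (hd n)

private lemma main_ineq (a b c : ℕ → ℝ) (ha : ∀ k, 0 < a k) (hb : ∀ k, 0 < b k)
    (hbmono : Monotone b)
    (hac : ∀ m : ℕ, ∑ k ∈ Finset.range (m + 1), a k ≤ ∑ k ∈ Finset.range (m + 1), c k)
    (s : ℝ) (hs : 0 < s) (n : ℕ) :
    ∑ k ∈ Finset.range (n + 1), ((s + 1) * (b k) ^ (-s) - s * (b k) ^ (-s - 1) * c k)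
      ≤ ∑ k ∈ Finset.range (n + 1), (a k) ^ (-s) := by
  have habel : ∑ k ∈ Finset.range (n + 1), (b k) ^ (-s - 1) * (a k - c k) ≤ 0 := by
    apply abel_nonpos
    · intro k; exact (Real.rpow_pos_of_pos (hb k) _).le
    · intro k
      exact Real.rpow_le_rpow_of_nonpos (hb k) (hbmono (Nat.le_succ k)) (by linarith)
    · intro m
      have := hac m
      rw [Finset.sum_sub_distrib]
      linarith
  have hpt : ∀ k ∈ Finset.range (n + 1),
      (s + 1) * (b k) ^ (-s) - s * (b k) ^ (-s - 1) * a k ≤ (a k) ^ (-s) :=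
    fun k _ => tangent_le s hs (hb k) (ha k)
  have h1 : ∑ k ∈ Finset.range (n + 1), ((s + 1) * (b k) ^ (-s) - s * (b k) ^ (-s - 1) * a k)
      ≤ ∑ k ∈ Finset.range (n + 1), (a k) ^ (-s) := Finset.sum_le_sum hpt
  have h2 : ∑ k ∈ Finset.range (n + 1), ((s + 1) * (b k) ^ (-s) - s * (b k) ^ (-s - 1) * c k)
      = ∑ k ∈ Finset.range (n + 1), ((s + 1) * (b k) ^ (-s) - s * (b k) ^ (-s - 1) * a k)
        + s * ∑ k ∈ Finset.range (n + 1), (b k) ^ (-s - 1) * (a k - c k) := by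
    rw [Finset.mul_sum, ← Finset.sum_add_distrib]
    apply Finset.sum_congr rfl
    intro k _
    ring
  rw [h2]
  nlinarith [mul_nonpos_of_nonneg_of_nonpos hs.le habel]

theorem negative_power_sum_bound
    (a b c : ℕ → ℝ) (ha : ∀ k, 0 < a k) (hb : ∀ k, 0 < b k) (hbmono : Monotone b)
    (hac : ∀ m : ℕ, ∑ k ∈ Finset.range (m + 1), a k ≤ ∑ k ∈ Finset.range (m + 1), c k)
    (s : ℝ) (hs : 0 < s) (n : ℕ) :
    (∑ k ∈ Finset.range (n + 1), (a k) ^ (-s)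
        ≥ ∑ k ∈ Finset.range (n + 1), ((s + 1) * (b k) ^ (-s) - s * (b k) ^ (-s - 1) * c k)) ∧
    ((∀ k, 0 < c k) → Monotone c →
      (∀ b' : ℕ → ℝ, (∀ k, 0 < b' k) →
        (∑ k ∈ Finset.range (n + 1), ((s + 1) * (b' k) ^ (-s) - s * (b' k) ^ (-s - 1) * c k)
            ≤ ∑ k ∈ Finset.range (n + 1), (c k) ^ (-s)) ∧
        ((∑ k ∈ Finset.range (n + 1), ((s + 1) * (b' k) ^ (-s) - s * (b' k) ^ (-s - 1) * c k)
            = ∑ k ∈ Finset.range (n + 1), (c k) ^ (-s)) ↔ ∀ k ≤ n, b' k = c k)) ∧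
      ∑ k ∈ Finset.range (n + 1), (a k) ^ (-s)
        ≥ ∑ k ∈ Finset.range (n + 1), (c k) ^ (-s)) := by
  constructor
  · exact main_ineq a b c ha hb hbmono hac s hs n
  · intro hc hcmono
    constructor
    · intro b' hb'
      have hpt : ∀ k ∈ Finset.range (n + 1),
          (s + 1) * (b' k) ^ (-s) - s * (b' k) ^ (-s - 1) * c k ≤ (c k) ^ (-s) :=
        fun k _ => tangent_le s hs (hb' k) (hc k)
      refine ⟨Finset.sum_le_sum hpt, ?_⟩
      rw [Finset.sum_eq_sum_iff_of_le hpt]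
      constructor
      · intro h k hk
        by_contra hne
        exact absurd (h k (Finset.mem_range.mpr (Nat.lt_succ_of_le hk)))
          (ne_of_lt (tangent_lt s hs (hb' k) (hc k) hne))
      · intro h k hk
        rw [h k (Nat.lt_succ_iff.mp (Finset.mem_range.mp hk))]
        exact tangent_eq_self s (hc k)
    · have := main_ineq a c c ha hc hcmono hac s hs n
      have heq : ∀ k ∈ Finset.range (n + 1),
          (s + 1) * (c k) ^ (-s) - s * (c k) ^ (-s - 1) * c k = (c k) ^ (-s) :=
        fun k _ => tangent_eq_self s (hc k)
      rw [Finset.sum_congr rfl heq] at this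
      exact this
end

section
/- For every k ∈ ℕ, the second difference of the sequence ω satisfies ω_{k+2} − 2ω_{k+1} + ω_k ≥ −√π/16; moreover ω_{k+2} − 2ω_{k+1} + ω_k = 0 whenever k is even, and the minimum value −√π/16 is attained at k = 1 (i.e. ω_3 − 2ω_2 + ω_1 = −√π/16). -/
open Real

noncomputable def gg (m : ℕ) : ℝ := Real.Gamma ((m : ℝ) + 1/2)

lemma gg_pos (m : ℕ) : 0 < gg m := Real.Gamma_pos_of_pos (by positivity)

lemma gg_succ (m : ℕ) : gg (m + 1) = ((m : ℝ) + 1/2) * gg m := by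
  unfold gg
  push_cast
  rw [show (m : ℝ) + 1 + 1/2 = ((m : ℝ) + 1/2) + 1 by ring,
    Real.Gamma_add_one (by positivity)]

lemma gg_zero : gg 0 = Real.sqrt π := by
  unfold gg
  rw [show ((0:ℕ):ℝ) + 1/2 = 1/2 by norm_num, Real.Gamma_one_half_eq]

lemma omega_even_s15 (m : ℕ) : omega (2 * m) = (2 * m + 1) * gg m / m.factorial := by
  rw [omega, if_neg (by simp [Nat.odd_iff, Nat.mul_mod_right])]
  have h1 : ((2 * m : ℕ) : ℝ) / 2 + 1 = (m : ℝ) + 1 := by push_cast; ring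
  have h2 : (((2 * m : ℕ) : ℝ) + 1) / 2 = (m : ℝ) + 1/2 := by push_cast; ring
  rw [h1, h2, Real.Gamma_nat_eq_factorial]
  unfold gg
  push_cast
  ring

lemma omega_odd_s15 (m : ℕ) :
    omega (2 * m + 1) = (4 * m + 5) / (2 * m + 2) * gg (m + 1) / m.factorial := by
  rw [omega, if_pos (by simp [Nat.odd_iff])]
  have h1 : ((2 * m + 1 : ℕ) : ℝ) / 2 + 1 = ((m + 1 : ℕ) : ℝ) + 1/2 := by push_cast; ring
  have h2 : (((2 * m + 1 : ℕ) : ℝ) + 1) / 2 = (m : ℝ) + 1 := by push_cast; ring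
  rw [h1, h2, Real.Gamma_nat_eq_factorial]
  unfold gg
  push_cast
  ring

lemma sd_even (m : ℕ) :
    omega (2 * m + 2) - 2 * omega (2 * m + 1) + omega (2 * m) = 0 := by
  have h2 : 2 * m + 2 = 2 * (m + 1) := by ring
  rw [h2, omega_even_s15, omega_odd_s15, omega_even_s15, gg_succ m]
  have hf : ((m + 1).factorial : ℝ) = ((m : ℝ) + 1) * m.factorial := by
    rw [Nat.factorial_succ]; push_cast; ring
  rw [hf]
  have hm : (0:ℝ) < (m : ℝ) + 1 := by positivity
  have hfac : (0:ℝ) < (m.factorial : ℝ) := by positivity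
  field_simp
  push_cast
  ring

lemma sd_odd (m : ℕ) :
    omega (2 * m + 3) - 2 * omega (2 * m + 2) + omega (2 * m + 1)
      = -(gg (m + 1) / (4 * ((m : ℝ) + 1) * ((m : ℝ) + 2) * m.factorial)) := by
  have h3 : 2 * m + 3 = 2 * (m + 1) + 1 := by ring
  have h2 : 2 * m + 2 = 2 * (m + 1) := by ring
  rw [h3, h2, omega_odd_s15 (m + 1), omega_even_s15 (m + 1), omega_odd_s15 m, gg_succ (m + 1)]
  have hf : ((m + 1).factorial : ℝ) = ((m : ℝ) + 1) * m.factorial := by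
    rw [Nat.factorial_succ]; push_cast; ring
  rw [hf]
  have hm : (0:ℝ) < (m : ℝ) + 1 := by positivity
  have hfac : (0:ℝ) < (m.factorial : ℝ) := by positivity
  field_simp
  push_cast
  ring

lemma D_le (m : ℕ) :
    gg (m + 1) / (4 * ((m : ℝ) + 1) * ((m : ℝ) + 2) * m.factorial) ≤ Real.sqrt π / 16 := by
  induction m with
  | zero =>
      rw [gg_succ 0, gg_zero]
      norm_num
      ring_nf
      linarith [Real.sqrt_nonneg π]
  | succ n ih =>
      refine le_trans ?_ ih
      rw [gg_succ (n + 1)]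
      have hf : ((n + 1).factorial : ℝ) = ((n : ℝ) + 1) * n.factorial := by
        rw [Nat.factorial_succ]; push_cast; ring
      rw [hf]
      have hg := gg_pos (n + 1)
      have hfac : (0:ℝ) < (n.factorial : ℝ) := by positivity
      rw [div_le_div_iff₀ (by push_cast; positivity) (by positivity)]
      push_cast
      nlinarith [gg_pos (n + 1), hfac, mul_pos hg hfac, sq_nonneg ((n:ℝ))]

theorem omega_second_difference :
    (∀ k : ℕ, omega (k + 2) - 2 * omega (k + 1) + omega k ≥ -Real.sqrt π / 16) ∧
    (∀ k : ℕ, Even k → omega (k + 2) - 2 * omega (k + 1) + omega k = 0) ∧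
    omega 3 - 2 * omega 2 + omega 1 = -Real.sqrt π / 16 := by
  have key : omega 3 - 2 * omega 2 + omega 1 = -Real.sqrt π / 16 := by
    have := sd_odd 0
    norm_num at this
    rw [this, show gg 1 = (((0:ℕ):ℝ) + 1/2) * gg 0 from gg_succ 0, gg_zero]
    norm_num
    ring
  refine ⟨?_, ?_, key⟩
  · intro k
    rcases Nat.even_or_odd k with ⟨m, hm⟩ | ⟨m, hm⟩
    · have hk : k = 2 * m := by omega
      subst hk
      have h := sd_even m
      have : omega (2 * m + 2) - 2 * omega (2 * m + 1) + omega (2 * m) = 0 := h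
      rw [this]
      have : (0:ℝ) ≤ Real.sqrt π := Real.sqrt_nonneg _
      linarith
    · have hk : k = 2 * m + 1 := by omega
      subst hk
      have h := sd_odd m
      rw [show 2 * m + 1 + 2 = 2 * m + 3 by ring, show 2 * m + 1 + 1 = 2 * m + 2 by ring, h]
      have := D_le m
      linarith
  · intro k hk
    obtain ⟨m, hm⟩ := hk
    have hk2 : k = 2 * m := by omega
    subst hk2
    exact sd_even m
end

section
/- For all k, m ∈ ℕ with m ≤ k, ∫_ℝ e^{−x²} H_{2m}(x) H_k(x)² dx = √π·2^{k+m}·k!·(2m)!·C(k,m)/m!, where C(k,m) is the binomial coefficient; and for every odd j, as well as for every even j > 2k, ∫_ℝ e^{−x²} H_j(x) H_k(x)² dx = 0. -/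
open Real MeasureTheory

noncomputable def H : ℕ → ℝ → ℝ
  | 0, _ => 1
  | 1, x => 2 * x
  | (n + 2), x => 2 * x * H (n + 1) x - 2 * ((n : ℝ) + 1) * H n x

lemma H_zero (x : ℝ) : H 0 x = 1 := rfl
lemma H_one (x : ℝ) : H 1 x = 2 * x := rfl

lemma H_succ (n : ℕ) (x : ℝ) : H (n+1) x = 2*x*H n x - 2*(n:ℝ)*H (n-1) x := by
  cases n with
  | zero => simp [H]
  | succ n => show H (n+2) x = _; rw [show H (n+2) x = 2*x*H (n+1) x - 2*((n:ℝ)+1)*H n x from rfl]; push_cast; ring_nf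

lemma hasDerivAt_H : ∀ (n : ℕ) (x : ℝ), HasDerivAt (fun y => H n y) (2*(n:ℝ)*H (n-1) x) x := by
  intro n
  induction n using Nat.strong_induction_on with
  | _ n ih =>
    match n with
    | 0 =>
      intro x
      simpa [H] using (hasDerivAt_const x (1:ℝ))
    | 1 =>
      intro x
      have : HasDerivAt (fun y : ℝ => 2 * y) 2 x := by simpa using (hasDerivAt_id x).const_mul 2
      simpa [H] using this
    | (n+2) =>
      intro x
      have h1 := ih (n+1) (by omega) x
      have h0 := ih n (by omega) x
      have hx : HasDerivAt (fun y : ℝ => 2 * y) 2 x := by simpa using (hasDerivAt_id x).const_mul 2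
      have hmul : HasDerivAt (fun y : ℝ => 2 * y * H (n+1) y)
          (2 * H (n+1) x + 2 * x * (2*((n:ℝ)+1)*H n x)) x := by
        have := hx.mul h1
        refine this.congr_deriv ?_
        push_cast
        ring
      have hsub : HasDerivAt (fun y : ℝ => 2 * y * H (n+1) y - 2*((n:ℝ)+1) * H n y)
          ((2 * H (n+1) x + 2 * x * (2*((n:ℝ)+1)*H n x)) - 2*((n:ℝ)+1) * (2*(n:ℝ)*H (n-1) x)) x := by
        have := h0.const_mul (2*((n:ℝ)+1))
        exact hmul.sub this
      have heq : (fun y : ℝ => H (n+2) y) = fun y => 2 * y * H (n+1) y - 2*((n:ℝ)+1) * H n y := by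
        funext y; rfl
      rw [heq]
      convert hsub using 1
      have h := H_succ n x
      rw [show (n+2-1) = n+1 from rfl, H_succ n x]
      push_cast
      ring

lemma H_poly : ∀ n : ℕ, ∃ p : Polynomial ℝ, ∀ x, H n x = p.eval x := by
  intro n
  induction n using Nat.strong_induction_on with
  | _ n ih =>
    match n with
    | 0 => exact ⟨1, fun x => by simp [H]⟩
    | 1 => exact ⟨Polynomial.C 2 * Polynomial.X, fun x => by simp [H]⟩
    | (n+2) =>
      obtain ⟨p1, hp1⟩ := ih (n+1) (by omega)
      obtain ⟨p0, hp0⟩ := ih n (by omega)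
      refine ⟨Polynomial.C 2 * Polynomial.X * p1 - Polynomial.C (2*((n:ℝ)+1)) * p0, fun x => ?_⟩
      show 2 * x * H (n + 1) x - 2 * ((n : ℝ) + 1) * H n x = _
      simp [hp1, hp0]

lemma integrable_poly_gauss (p : Polynomial ℝ) :
    Integrable fun x : ℝ => p.eval x * Real.exp (-x^2) := by
  induction p using Polynomial.induction_on' with
  | add p q hp hq => simpa [add_mul, Pi.add_def] using hp.add hq
  | monomial n a =>
    have h : Integrable fun x : ℝ => x ^ n * Real.exp (-x^2) := by
      have := integrable_rpow_mul_exp_neg_mul_sq (b := 1) one_pos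
        (s := (n : ℝ)) (lt_of_lt_of_le neg_one_lt_zero (Nat.cast_nonneg n))
      simpa [Real.rpow_natCast] using this
    have := h.const_mul a
    simpa [Polynomial.eval_monomial, mul_assoc] using this

lemma integrable_gauss_HHH (a b c : ℕ) :
    Integrable fun x : ℝ => Real.exp (-x^2) * H a x * H b x * H c x := by
  obtain ⟨pa, ha⟩ := H_poly a
  obtain ⟨pb, hb⟩ := H_poly b
  obtain ⟨pc, hc⟩ := H_poly c
  have : (fun x : ℝ => Real.exp (-x^2) * H a x * H b x * H c x)
      = fun x => (pa*pb*pc).eval x * Real.exp (-x^2) := by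
    funext x; simp [ha, hb, hc]; ring
  rw [this]
  exact integrable_poly_gauss _

noncomputable def J (a b c : ℕ) : ℝ := ∫ x : ℝ, Real.exp (-x^2) * H a x * H b x * H c x

lemma J_symm1 (a b c : ℕ) : J a b c = J b a c := by
  unfold J; congr 1; funext x; ring

lemma J_symm2 (a b c : ℕ) : J a b c = J a c b := by
  unfold J; congr 1; funext x; ring

lemma J_step (a b c : ℕ) : J (a+1) b c = 2*(b:ℝ) * J a (b-1) c + 2*(c:ℝ) * J a b (c-1) := by
  set u : ℝ → ℝ := fun x => Real.exp (-x^2) * H a x with hu_def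
  set v : ℝ → ℝ := fun x => H b x * H c x with hv_def
  set u' : ℝ → ℝ := fun x => -(Real.exp (-x^2) * H (a+1) x) with hu'_def
  set v' : ℝ → ℝ := fun x => 2*(b:ℝ)*(H (b-1) x * H c x) + 2*(c:ℝ)*(H b x * H (c-1) x) with hv'_def
  have hu : ∀ x, HasDerivAt u (u' x) x := by
    intro x
    have hexp : HasDerivAt (fun y : ℝ => Real.exp (-y^2)) (-(2*x) * Real.exp (-x^2)) x := by
      have h1 : HasDerivAt (fun y : ℝ => -y^2) (-(2*x)) x := by
        simpa using (hasDerivAt_pow 2 x).const_mul (-1)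
      simpa [mul_comm] using h1.exp
    have := hexp.mul (hasDerivAt_H a x)
    refine this.congr_deriv ?_
    rw [hu'_def]
    simp only
    rw [H_succ a x]
    ring
  have hv : ∀ x, HasDerivAt v (v' x) x := by
    intro x
    have := (hasDerivAt_H b x).mul (hasDerivAt_H c x)
    refine this.congr_deriv ?_
    rw [hv'_def]; ring
  have hint1 : Integrable (u * v') := by
    have e : (u * v') = fun x => (2*(b:ℝ)) * (Real.exp (-x^2) * H a x * H (b-1) x * H c x)
        + (2*(c:ℝ)) * (Real.exp (-x^2) * H a x * H b x * H (c-1) x) := by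
      funext x; simp [hu_def, hv'_def, Pi.mul_apply]; ring
    rw [e]
    exact ((integrable_gauss_HHH a (b-1) c).const_mul _).add ((integrable_gauss_HHH a b (c-1)).const_mul _)
  have hint2 : Integrable (u' * v) := by
    have e : (u' * v) = fun x => -(Real.exp (-x^2) * H (a+1) x * H b x * H c x) := by
      funext x; simp [hu'_def, hv_def, Pi.mul_apply]; ring
    rw [e]
    exact (integrable_gauss_HHH (a+1) b c).neg
  have hint3 : Integrable (u * v) := by
    have e : (u * v) = fun x => Real.exp (-x^2) * H a x * H b x * H c x := by
      funext x; simp [hu_def, hv_def, Pi.mul_apply]; ring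
    rw [e]
    exact integrable_gauss_HHH a b c
  have key := MeasureTheory.integral_mul_deriv_eq_deriv_mul_of_integrable (fun x _ => hu x) (fun x _ => hv x) hint1 hint2 hint3
  have lhs_eq : ∫ x : ℝ, u x * v' x
      = 2*(b:ℝ) * J a (b-1) c + 2*(c:ℝ) * J a b (c-1) := by
    have e1 : (fun x : ℝ => u x * v' x) = fun x =>
        (2*(b:ℝ)) * (Real.exp (-x^2) * H a x * H (b-1) x * H c x)
        + (2*(c:ℝ)) * (Real.exp (-x^2) * H a x * H b x * H (c-1) x) := by
      funext x; simp [hu_def, hv'_def]; ring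
    rw [e1, integral_add (((integrable_gauss_HHH a (b-1) c).const_mul _))
      (((integrable_gauss_HHH a b (c-1)).const_mul _)), MeasureTheory.integral_const_mul, MeasureTheory.integral_const_mul]
    rfl
  have rhs_eq : -∫ x : ℝ, u' x * v x = J (a+1) b c := by
    have e2 : (fun x : ℝ => u' x * v x) = fun x =>
        -(Real.exp (-x^2) * H (a+1) x * H b x * H c x) := by
      funext x; simp [hu'_def, hv_def]; ring
    rw [e2, integral_neg, neg_neg]
    rfl
  rw [← lhs_eq, key, rhs_eq]

lemma J000 : J 0 0 0 = Real.sqrt π := by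
  unfold J
  have : (fun x : ℝ => Real.exp (-x^2) * H 0 x * H 0 x * H 0 x)
      = fun x : ℝ => Real.exp (-(1:ℝ)*x^2) := by
    funext x; simp [H]
  rw [this, integral_gaussian]
  simp

lemma J_b0c : ∀ b c : ℕ, J b 0 c = if b = c then Real.sqrt π * 2^b * (Nat.factorial b : ℝ) else 0 := by
  intro b
  induction b with
  | zero =>
    intro c
    cases c with
    | zero => simpa using J000
    | succ c =>
      rw [J_symm2, J_symm1, J_step]
      simp
  | succ b ih =>
    intro c
    rw [J_step]
    cases c with
    | zero => simp
    | succ c =>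
      simp only [Nat.add_sub_cancel]
      rw [ih c]
      simp only [Nat.cast_zero, mul_zero, zero_mul, zero_add, Nat.add_sub_cancel]
      by_cases h : b = c
      · subst h
        rw [if_pos rfl, if_pos rfl]
        rw [Nat.factorial_succ]
        push_cast
        ring
      · rw [if_neg h, if_neg (by omega)]
        simp

lemma J_zero : ∀ a b c : ℕ, ¬(Even (a+b+c) ∧ a ≤ b+c ∧ b ≤ a+c ∧ c ≤ a+b) → J a b c = 0 := by
  intro a
  induction a with
  | zero =>
    intro b c h
    have hbc : b ≠ c := by
      intro he; subst he
      exact h ⟨by simp [Nat.even_add], by omega, by omega, by omega⟩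
    rw [J_symm1, J_b0c, if_neg hbc]
  | succ a ih =>
    intro b c h
    rw [Nat.even_iff] at h
    rw [J_step]
    have h1 : 2*(b:ℝ) * J a (b-1) c = 0 := by
      rcases Nat.eq_zero_or_pos b with hb | hb
      · subst hb; simp
      · rw [ih (b-1) c (by rw [Nat.even_iff]; omega)]; ring
    have h2 : 2*(c:ℝ) * J a b (c-1) = 0 := by
      rcases Nat.eq_zero_or_pos c with hc | hc
      · subst hc; simp
      · rw [ih b (c-1) (by rw [Nat.even_iff]; omega)]; ring
    rw [h1, h2, add_zero]

lemma J_val : ∀ a p q r : ℕ, q + r = a →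
    J a (p+r) (p+q) = Real.sqrt π * 2^(p+q+r) * ((q+r).factorial:ℝ) * ((p+r).factorial:ℝ) *
      ((p+q).factorial:ℝ) / ((p.factorial:ℝ) * (q.factorial:ℝ) * (r.factorial:ℝ)) := by
  intro a
  induction a with
  | zero =>
    intro p q r h
    have hq : q = 0 := by omega
    have hr : r = 0 := by omega
    subst hq; subst hr
    simp only [Nat.add_zero, Nat.factorial_zero]
    rw [J_symm1, J_b0c, if_pos rfl]
    have hp : ((p.factorial : ℝ)) ≠ 0 := Nat.cast_ne_zero.mpr (Nat.factorial_ne_zero p)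
    field_simp
    simp
  | succ a ih =>
    intro p q r h
    rw [J_step]
    have hpfac : ((p.factorial : ℝ)) ≠ 0 := Nat.cast_ne_zero.mpr (Nat.factorial_ne_zero _)
    rcases r with _ | r
    · -- r = 0
      rcases q with _ | q
      · omega
      · have hterm1 : 2*((p+0:ℕ):ℝ) * J a (p+0-1) (p+(q+1)) = 0 := by
          rcases Nat.eq_zero_or_pos p with hp | hp
          · subst hp; simp
          · rw [J_zero a (p+0-1) (p+(q+1)) (by rw [Nat.even_iff]; omega)]; ring
        rw [hterm1, zero_add, show p+(q+1)-1 = p+q by omega, ih p q 0 (by omega)]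
        simp only [Nat.add_zero, Nat.zero_add]
        rw [show p+(q+1) = (p+q)+1 by omega, Nat.factorial_succ (p+q), Nat.factorial_succ q,
          pow_succ, Nat.factorial_zero]
        have h2 : ((q.factorial : ℝ)) ≠ 0 := Nat.cast_ne_zero.mpr (Nat.factorial_ne_zero _)
        push_cast
        field_simp
    · rcases q with _ | q
      · -- q = 0
        have hterm2 : 2*((p+0:ℕ):ℝ) * J a (p+(r+1)) (p+0-1) = 0 := by
          rcases Nat.eq_zero_or_pos p with hp | hp
          · subst hp; simp
          · rw [J_zero a (p+(r+1)) (p+0-1) (by rw [Nat.even_iff]; omega)]; ring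
        rw [hterm2, add_zero, show p+(r+1)-1 = p+r by omega, ih p 0 r (by omega)]
        simp only [Nat.add_zero, Nat.zero_add]
        rw [show p+(r+1) = (p+r)+1 by omega, Nat.factorial_succ (p+r), Nat.factorial_succ r,
          pow_succ, Nat.factorial_zero]
        have h2 : ((r.factorial : ℝ)) ≠ 0 := Nat.cast_ne_zero.mpr (Nat.factorial_ne_zero _)
        push_cast
        field_simp
      · -- q, r both positive
        rw [show p+(r+1)-1 = p+r by omega, show p+(q+1)-1 = p+q by omega]
        rw [ih p (q+1) r (by omega), ih p q (r+1) (by omega)]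
        rw [show p+(q+1)+(r+1) = (p+q+r)+1+1 by omega,
            show p+(q+1)+r = (p+q+r)+1 by omega,
            show p+q+(r+1) = (p+q+r)+1 by omega,
            show (q+1)+(r+1) = (q+r+1)+1 by omega,
            show (q+1)+r = q+r+1 by omega,
            show q+(r+1) = q+r+1 by omega,
            show p+(q+1) = (p+q)+1 by omega,
            show p+(r+1) = (p+r)+1 by omega]
        rw [Nat.factorial_succ (q+r+1), Nat.factorial_succ (p+q), Nat.factorial_succ (p+r),
            Nat.factorial_succ q, Nat.factorial_succ r, pow_succ, pow_succ]
        have h2 : ((q.factorial : ℝ)) ≠ 0 := Nat.cast_ne_zero.mpr (Nat.factorial_ne_zero _)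
        have h3 : ((r.factorial : ℝ)) ≠ 0 := Nat.cast_ne_zero.mpr (Nat.factorial_ne_zero _)
        push_cast
        field_simp
        ring

theorem integral_hermite_times_hermite_sq :
    (∀ k m : ℕ, m ≤ k →
      ∫ x : ℝ, Real.exp (-x ^ 2) * H (2 * m) x * (H k x) ^ 2
        = Real.sqrt π * 2 ^ (k + m) * (Nat.factorial k : ℝ) *
            (Nat.factorial (2 * m) : ℝ) * (Nat.choose k m : ℝ) / (Nat.factorial m : ℝ)) ∧
    (∀ k j : ℕ, (Odd j ∨ (Even j ∧ 2 * k < j)) →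
      ∫ x : ℝ, Real.exp (-x ^ 2) * H j x * (H k x) ^ 2 = 0) := by
  have hJ : ∀ j k : ℕ, (∫ x : ℝ, Real.exp (-x ^ 2) * H j x * (H k x) ^ 2) = J j k k := by
    intro j k
    unfold J
    congr 1
    funext x
    ring
  constructor
  · intro k m hmk
    rw [hJ]
    have hval := J_val (2*m) (k-m) m m (by omega)
    rw [show (k-m)+m = k by omega] at hval
    rw [show m+m = 2*m by ring] at hval
    rw [hval]
    have key := Nat.choose_mul_factorial_mul_factorial hmk
    have keyR : ((k.choose m : ℕ):ℝ) * (m.factorial:ℝ) * ((k-m).factorial:ℝ)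
        = (k.factorial:ℝ) := by exact_mod_cast congrArg (Nat.cast (R := ℝ)) key
    have h1 : ((m.factorial : ℝ)) ≠ 0 := Nat.cast_ne_zero.mpr (Nat.factorial_ne_zero _)
    have h2 : (((k-m).factorial : ℝ)) ≠ 0 := Nat.cast_ne_zero.mpr (Nat.factorial_ne_zero _)
    have hc : ((k.choose m : ℕ):ℝ) = (k.factorial:ℝ)/((m.factorial:ℝ)*((k-m).factorial:ℝ)) := by
      rw [eq_div_iff (by positivity)]
      linear_combination keyR
    rw [hc]
    field_simp
  · intro k j hj
    rw [hJ]
    apply J_zero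
    rintro ⟨he, h1, -, -⟩
    rw [Nat.even_iff] at he
    rcases hj with hodd | ⟨hev, hlt⟩
    · rw [Nat.odd_iff] at hodd; omega
    · omega
end

section
/- ω_n = √(2n) + O(1/√n) as n → ∞; that is, there exists a constant C > 0 such that |ω_n − √(2n)| ≤ C/√n for all n ≥ 1. -/
set_option maxHeartbeats 800000


open Real

lemma sq_Gamma_midpoint (a b : ℝ) (ha : 0 < a) (hb : 0 < b) :
    Real.Gamma ((a + b) / 2) ^ 2 ≤ Real.Gamma a * Real.Gamma b := by
  have hm : 0 < (a + b) / 2 := by linarith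
  have hGa := Real.Gamma_pos_of_pos ha
  have hGb := Real.Gamma_pos_of_pos hb
  have hGm := Real.Gamma_pos_of_pos hm
  have h := Real.convexOn_log_Gamma.2 (Set.mem_Ioi.mpr ha) (Set.mem_Ioi.mpr hb)
    (by norm_num : (0:ℝ) ≤ 1/2) (by norm_num : (0:ℝ) ≤ 1/2) (by norm_num)
  simp only [Function.comp, smul_eq_mul] at h
  have hmm : (1/2 : ℝ) * a + (1/2 : ℝ) * b = (a + b) / 2 := by ring
  rw [hmm] at h
  have h2 : Real.log (Real.Gamma ((a + b) / 2) ^ 2) ≤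
      Real.log (Real.Gamma a * Real.Gamma b) := by
    rw [Real.log_pow, Real.log_mul hGa.ne' hGb.ne']
    push_cast
    linarith
  exact (Real.log_le_log_iff (by positivity) (by positivity)).mp h2

lemma ratio_lb (x : ℝ) (hx : 0 < x) :
    Real.sqrt x * Real.Gamma (x + 1/2) ≤ Real.Gamma (x + 1) := by
  have h := sq_Gamma_midpoint x (x + 1) hx (by linarith)
  have hmid : (x + (x + 1)) / 2 = x + 1/2 := by ring
  rw [hmid, Real.Gamma_add_one hx.ne'] at h
  have hG := Real.Gamma_pos_of_pos hx
  have hG2 := Real.Gamma_pos_of_pos (show (0:ℝ) < x + 1/2 by linarith)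
  have hkey : (Real.sqrt x * Real.Gamma (x + 1/2)) ^ 2 ≤ (x * Real.Gamma x) ^ 2 := by
    rw [mul_pow, Real.sq_sqrt hx.le]
    nlinarith
  have := Real.sqrt_le_sqrt hkey
  rwa [Real.sqrt_sq (by positivity), Real.sqrt_sq (by positivity),
    ← Real.Gamma_add_one hx.ne'] at this

lemma ratio_ub (x : ℝ) (hx : 0 < x) :
    Real.Gamma (x + 1) ≤ Real.sqrt (x + 1/2) * Real.Gamma (x + 1/2) := by
  have hx2 : (0:ℝ) < x + 1/2 := by linarith
  have h := sq_Gamma_midpoint (x + 1/2) (x + 3/2) hx2 (by linarith)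
  have hmid : ((x + 1/2) + (x + 3/2)) / 2 = x + 1 := by ring
  have h32 : x + 3/2 = (x + 1/2) + 1 := by ring
  rw [hmid, h32, Real.Gamma_add_one hx2.ne'] at h
  have hG2 := Real.Gamma_pos_of_pos hx2
  have hG1 := Real.Gamma_pos_of_pos (show (0:ℝ) < x + 1 by linarith)
  have hkey : Real.Gamma (x + 1) ^ 2 ≤ (Real.sqrt (x + 1/2) * Real.Gamma (x + 1/2)) ^ 2 := by
    rw [mul_pow, Real.sq_sqrt hx2.le]
    nlinarith
  have := Real.sqrt_le_sqrt hkey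
  rwa [Real.sqrt_sq (by positivity), Real.sqrt_sq (by positivity)] at this

theorem omega_asymptotics :
    ∃ C > 0, ∀ n : ℕ, 1 ≤ n →
      |omega n - Real.sqrt (2 * n)| ≤ C / Real.sqrt n := by
  refine ⟨3, by norm_num, fun n hn => ?_⟩
  have hn1 : (1:ℝ) ≤ (n:ℝ) := by exact_mod_cast hn
  set s := Real.sqrt n with hs_def
  set t := Real.sqrt ((n:ℝ) + 1) with ht_def
  set r := Real.sqrt 2 with hr_def
  have hs2 : s ^ 2 = (n:ℝ) := Real.sq_sqrt (by linarith)
  have ht2 : t ^ 2 = (n:ℝ) + 1 := Real.sq_sqrt (by linarith)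
  have hr2 : r ^ 2 = 2 := Real.sq_sqrt (by norm_num)
  have hs1 : 1 ≤ s := by
    rw [hs_def, show (1:ℝ) = Real.sqrt 1 by simp]
    exact Real.sqrt_le_sqrt hn1
  have hs0 : 0 < s := by linarith
  have hst : s ≤ t := Real.sqrt_le_sqrt (by linarith)
  have ht0 : 0 < t := by linarith
  have hr1 : 1 ≤ r := by
    rw [hr_def, show (1:ℝ) = Real.sqrt 1 by simp]
    exact Real.sqrt_le_sqrt (by norm_num)
  have hr0 : 0 < r := by linarith
  have hr3 : r ≤ 3 := by nlinarith
  have hx : (0:ℝ) < (n:ℝ) / 2 := by linarith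
  have hG1 := Real.Gamma_pos_of_pos (show (0:ℝ) < (n:ℝ)/2 + 1/2 by linarith)
  have hG2 := Real.Gamma_pos_of_pos (show (0:ℝ) < (n:ℝ)/2 + 1 by linarith)
  set G1 := Real.Gamma ((n:ℝ)/2 + 1/2) with hG1_def
  set G2 := Real.Gamma ((n:ℝ)/2 + 1) with hG2_def
  have hlb : (s / r) * G1 ≤ G2 := by
    have := ratio_lb ((n:ℝ)/2) hx
    rwa [show (n:ℝ)/2 = (n:ℝ)/2 by rfl, Real.sqrt_div (by positivity) 2] at this
  have hub : G2 ≤ (t / r) * G1 := by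
    have h := ratio_ub ((n:ℝ)/2) hx
    have he : Real.sqrt ((n:ℝ)/2 + 1/2) = t / r := by
      rw [show (n:ℝ)/2 + 1/2 = ((n:ℝ)+1)/2 by ring, Real.sqrt_div (by positivity) 2]
    rwa [he] at h
  have hsqrt2n : Real.sqrt (2 * (n:ℝ)) = r * s := Real.sqrt_mul (by norm_num) _
  have hrw : ((n:ℝ) + 1) / 2 = (n:ℝ)/2 + 1/2 := by ring
  rw [omega, hrw, hsqrt2n, ← hG1_def, ← hG2_def]
  clear_value s t r G1 G2
  rw [abs_le]
  have h3s : 0 < 3 / s := by positivity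
  have hsr0 : 0 < s / r := by positivity
  have htr0 : 0 < t / r := by positivity
  by_cases hodd : Odd n
  · rw [if_pos hodd]
    constructor
    · -- lower bound: r*s ≤ ω
      have h1 : r * s * G1 ≤ (2 * (n:ℝ) + 3) / ((n:ℝ) + 1) * G2 := by
        have h2 : (2 * (n:ℝ) + 3) / ((n:ℝ) + 1) * ((s / r) * G1) ≤
            (2 * (n:ℝ) + 3) / ((n:ℝ) + 1) * G2 := by
          gcongr
        refine le_trans ?_ h2
        rw [div_mul_eq_mul_div, le_div_iff₀ (by linarith : (0:ℝ) < (n:ℝ) + 1)]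
        have he : (2 * (n:ℝ) + 3) * (s / r * G1) = (2 * (n:ℝ) + 3) * s * G1 / r := by ring
        rw [he, le_div_iff₀ hr0]
        nlinarith [mul_pos hs0 hG1, mul_nonneg (mul_pos hs0 hG1).le (by linarith : (0:ℝ) ≤ (n:ℝ))]
      have : r * s ≤ (2 * (n:ℝ) + 3) / ((n:ℝ) + 1) * G2 / G1 := by
        rw [le_div_iff₀ hG1]
        exact h1
      linarith
    · -- upper bound: ω ≤ r*s + 3/s
      have h2 : (2 * (n:ℝ) + 3) / ((n:ℝ) + 1) * G2 / G1 ≤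
          (2 * (n:ℝ) + 3) / ((n:ℝ) + 1) * ((t / r) * G1) / G1 := by
        gcongr
      have h3 : (2 * (n:ℝ) + 3) / ((n:ℝ) + 1) * ((t / r) * G1) / G1 =
          (2 * (n:ℝ) + 3) / ((n:ℝ) + 1) * (t / r) := by
        field_simp
      have h4 : (2 * (n:ℝ) + 3) / ((n:ℝ) + 1) * (t / r) ≤ r * s + 3 / s := by
        rw [div_mul_div_comm, div_le_iff₀ (by positivity)]
        have h5 : (2 * (n:ℝ) + 3) * t ≤ (r * s + 3 / s) * (((n:ℝ) + 1) * r) := by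
          rw [← ht2, ← hs2]
          have hdiv : 3 / s * s = 3 := by field_simp
          have hdiv3 : 3 / s * s * t = 3 * t := by rw [hdiv]
          have hrts : s ≤ r * t := hst.trans (le_mul_of_one_le_left ht0.le hr1)
          have e : (r * s + 3 / s) * (t ^ 2 * r) = r ^ 2 * (s * t ^ 2) + (3 / s * t) * (r * t) := by
            ring
          rw [e, hr2]
          have hA : (2 * s ^ 2) * t ≤ 2 * (s * t ^ 2) := by
            nlinarith [mul_nonneg (mul_nonneg hs0.le ht0.le) (sub_nonneg.mpr hst)]
          have hB : 3 * t ≤ (3 / s * t) * (r * t) := by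
            have e2 : (3 / s * t) * (r * t) = (3 / s * t) * (r * t - s) + 3 * t := by
              field_simp
              ring
            have e3 : (0:ℝ) ≤ (3 / s * t) * (r * t - s) :=
              mul_nonneg (mul_nonneg h3s.le ht0.le) (sub_nonneg.mpr hrts)
            linarith
          linarith
        linarith
      linarith
  · rw [if_neg hodd]
    constructor
    · -- lower bound: r*s ≤ ω = (n+1)*G1/G2
      have h1 : r * t ≤ ((n:ℝ) + 1) * G1 / G2 := by
        rw [le_div_iff₀ hG2]
        calc r * t * G2 ≤ r * t * ((t / r) * G1) := by gcongr <;> positivity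
          _ = t^2 * G1 := by
              field_simp
              try ring
          _ = ((n:ℝ) + 1) * G1 := by rw [ht2]
      have : r * s ≤ r * t := by nlinarith
      linarith
    · -- upper bound: ω ≤ r*s + 3/s
      have h1 : ((n:ℝ) + 1) * G1 / G2 ≤ ((n:ℝ) + 1) * G1 / ((s / r) * G1) :=
        div_le_div_of_nonneg_left (by positivity) (by positivity) hlb
      have h2 : ((n:ℝ) + 1) * G1 / ((s / r) * G1) = ((n:ℝ) + 1) * r / s := by
        field_simp
      have h3 : ((n:ℝ) + 1) * r / s ≤ r * s + 3 / s := by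
        rw [div_le_iff₀ hs0]
        have hdiv : 3 / s * s = 3 := by field_simp
        nlinarith [hs2, sq_nonneg s]
      linarith
end
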